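/- arXiv:math/0005070 — 11 statements merged into one kernel-verified Lean document; each statement's English description precedes it below -/
import Mathlib

section
/- Let P, Q be primitive vectors in ℤ³ and let d be the gcd of the absolute values of the 2×2 minors of the 3×2 matrix with columns P and Q. If d > 1, then there exists a unique integer d₁ with 1 ≤ d₁ < d such that (P + d₁·Q)/d is an integral vector, i.e., d divides every coordinate of P + d₁·Q. -/
/-!
The minors of `(P | Q)` are the coordinates of `P × Q`, so if `u · Q = 1` then
`P - (u · P) Q = u × (P × Q)` is divisible by `d`. Thus `t = -(u · P)` is a solution, and
since `u · Q = 1` the solutions form exactly the class of `t` modulo `d`. Its representative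
in `[0, d)` is not `0`, because `d > 1` cannot divide the primitive vector `P`.
-/

/-- gcd of the absolute values of the three 2×2 minors of the 3×2 matrix
with columns `(p₁,p₂,p₃)` and `(q₁,q₂,q₃)`. -/
def mg (p₁ p₂ p₃ q₁ q₂ q₃ : ℤ) : ℕ :=
  Int.gcd (p₁ * q₂ - p₂ * q₁) (Int.gcd (p₁ * q₃ - p₃ * q₁) (p₂ * q₃ - p₃ * q₂))

theorem Int.exists_mul_add_mul_add_mul_eq_one {x y z : ℤ} (h : Int.gcd x (Int.gcd y z) = 1) :
    ∃ a b c : ℤ, a * x + b * y + c * z = 1 := by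
  obtain ⟨a, e, hae⟩ := Int.isCoprime_iff_gcd_eq_one.mpr h
  refine ⟨a, e * Int.gcdA y z, e * Int.gcdB y z, ?_⟩
  rw [Int.gcd_eq_gcd_ab] at hae
  linear_combination hae

theorem mg_dvd_minors (p₁ p₂ p₃ q₁ q₂ q₃ : ℤ) :
    (mg p₁ p₂ p₃ q₁ q₂ q₃ : ℤ) ∣ p₁ * q₂ - p₂ * q₁ ∧
      (mg p₁ p₂ p₃ q₁ q₂ q₃ : ℤ) ∣ p₁ * q₃ - p₃ * q₁ ∧
      (mg p₁ p₂ p₃ q₁ q₂ q₃ : ℤ) ∣ p₂ * q₃ - p₃ * q₂ :=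
  ⟨Int.gcd_dvd_left _ _, (Int.gcd_dvd_right _ _).trans (Int.gcd_dvd_left _ _),
    (Int.gcd_dvd_right _ _).trans (Int.gcd_dvd_right _ _)⟩

theorem Int.not_dvd_of_gcd_eq_one {d x y z : ℤ} (hd : 1 < d)
    (h : Int.gcd x (Int.gcd y z) = 1) : ¬ (d ∣ x ∧ d ∣ y ∧ d ∣ z) := by
  rintro ⟨hx, hy, hz⟩
  have h₁ : d ∣ 1 := by
    simpa [h] using Int.dvd_coe_gcd hx (Int.dvd_coe_gcd hy hz)
  have := Int.le_of_dvd one_pos h₁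
  omega

section CommRing

variable {R : Type*} [CommRing R] {p₁ p₂ p₃ q₁ q₂ q₃ u₁ u₂ u₃ d : R}

theorem exists_dvd_add_mul_of_dvd_minors (hu : u₁ * q₁ + u₂ * q₂ + u₃ * q₃ = 1)
    (h₁₂ : d ∣ p₁ * q₂ - p₂ * q₁) (h₁₃ : d ∣ p₁ * q₃ - p₃ * q₁)
    (h₂₃ : d ∣ p₂ * q₃ - p₃ * q₂) :
    ∃ t : R, d ∣ p₁ + t * q₁ ∧ d ∣ p₂ + t * q₂ ∧ d ∣ p₃ + t * q₃ := by
  refine ⟨-(u₁ * p₁ + u₂ * p₂ + u₃ * p₃), ?_, ?_, ?_⟩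
  · have h : p₁ + -(u₁ * p₁ + u₂ * p₂ + u₃ * p₃) * q₁ =
        u₂ * (p₁ * q₂ - p₂ * q₁) + u₃ * (p₁ * q₃ - p₃ * q₁) := by
      linear_combination -p₁ * hu
    rw [h]
    exact dvd_add (h₁₂.mul_left _) (h₁₃.mul_left _)
  · have h : p₂ + -(u₁ * p₁ + u₂ * p₂ + u₃ * p₃) * q₂ =
        -u₁ * (p₁ * q₂ - p₂ * q₁) + u₃ * (p₂ * q₃ - p₃ * q₂) := by
      linear_combination -p₂ * hu
    rw [h]
    exact dvd_add (h₁₂.mul_left _) (h₂₃.mul_left _)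
  · have h : p₃ + -(u₁ * p₁ + u₂ * p₂ + u₃ * p₃) * q₃ =
        -u₁ * (p₁ * q₃ - p₃ * q₁) - u₂ * (p₂ * q₃ - p₃ * q₂) := by
      linear_combination -p₃ * hu
    rw [h]
    exact dvd_sub (h₁₃.mul_left _) (h₂₃.mul_left _)

theorem dvd_add_mul_iff_dvd_sub (hu : u₁ * q₁ + u₂ * q₂ + u₃ * q₃ = 1) {s t : R}
    (ht : d ∣ p₁ + t * q₁ ∧ d ∣ p₂ + t * q₂ ∧ d ∣ p₃ + t * q₃) :
    (d ∣ p₁ + s * q₁ ∧ d ∣ p₂ + s * q₂ ∧ d ∣ p₃ + s * q₃) ↔ d ∣ s - t := by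
  obtain ⟨ht₁, ht₂, ht₃⟩ := ht
  constructor
  · rintro ⟨hs₁, hs₂, hs₃⟩
    have h : s - t = u₁ * ((p₁ + s * q₁) - (p₁ + t * q₁)) +
        u₂ * ((p₂ + s * q₂) - (p₂ + t * q₂)) + u₃ * ((p₃ + s * q₃) - (p₃ + t * q₃)) := by
      linear_combination (t - s) * hu
    rw [h]
    exact dvd_add (dvd_add ((dvd_sub hs₁ ht₁).mul_left _) ((dvd_sub hs₂ ht₂).mul_left _))
      ((dvd_sub hs₃ ht₃).mul_left _)
  · intro hst
    have h : ∀ p q : R, p + s * q = (p + t * q) + (s - t) * q := fun p q => by ring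
    rw [h, h, h]
    exact ⟨dvd_add ht₁ (hst.mul_right _), dvd_add ht₂ (hst.mul_right _),
      dvd_add ht₃ (hst.mul_right _)⟩

end CommRing

theorem stmt0 (p₁ p₂ p₃ q₁ q₂ q₃ : ℤ)
    (hP : Int.gcd p₁ (Int.gcd p₂ p₃) = 1)
    (hQ : Int.gcd q₁ (Int.gcd q₂ q₃) = 1)
    (d : ℤ) (hd : d = (mg p₁ p₂ p₃ q₁ q₂ q₃ : ℤ)) (hd1 : 1 < d) :
    ∃! d₁ : ℤ, (1 ≤ d₁ ∧ d₁ < d) ∧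
      d ∣ p₁ + d₁ * q₁ ∧ d ∣ p₂ + d₁ * q₂ ∧ d ∣ p₃ + d₁ * q₃ := by
  obtain ⟨h₁₂, h₁₃, h₂₃⟩ := hd ▸ mg_dvd_minors p₁ p₂ p₃ q₁ q₂ q₃
  obtain ⟨u₁, u₂, u₃, hu⟩ := Int.exists_mul_add_mul_add_mul_eq_one hQ
  obtain ⟨t, ht⟩ := exists_dvd_add_mul_of_dvd_minors hu h₁₂ h₁₃ h₂₃
  have hd0 : 0 < d := one_pos.trans hd1
  have hsol := (dvd_add_mul_iff_dvd_sub hu ht).mpr (Int.mod_modEq t d).symm.dvd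
  have hlo := Int.emod_nonneg t hd0.ne'
  have hhi := Int.emod_lt_of_pos t hd0
  refine ⟨t % d, ⟨⟨?_, hhi⟩, hsol⟩, ?_⟩
  · have hne : t % d ≠ 0 := fun h0 =>
      Int.not_dvd_of_gcd_eq_one hd1 hP (by simpa [h0] using hsol)
    omega
  · rintro e ⟨⟨he₁, he₂⟩, he⟩
    have hdvd := (dvd_add_mul_iff_dvd_sub hu hsol).mp he
    have := Int.eq_zero_of_abs_lt_dvd hdvd (abs_sub_lt_iff.mpr ⟨by omega, by omega⟩)
    omega
end

section
/- Let P = (p₁,p₂,p₃) and Q = (q₁,q₂,q₃) be primitive vectors in ℤ³ with d := gcd of the 2×2 minors of (P,Q) satisfying d > 1. Suppose R ∈ ℤ³ can be written R = (βP + αQ)/d with positive integers α, β. Then α = gcd of the 2×2 minors of (P,R) and β = gcd of the 2×2 minors of (R,Q); in particular α and β are positive integers satisfying α·q_ℓ + β·p_ℓ ≡ 0 (mod d) for each ℓ = 1,2,3. -/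
lemma mg_eq (p₁ p₂ p₃ q₁ q₂ q₃ : ℤ) :
    mg p₁ p₂ p₃ q₁ q₂ q₃ =
      Nat.gcd (p₁ * q₂ - p₂ * q₁).natAbs
        (Nat.gcd (p₁ * q₃ - p₃ * q₁).natAbs (p₂ * q₃ - p₃ * q₂).natAbs) := by
  simp [mg, Int.gcd]

theorem stmt1 (p₁ p₂ p₃ q₁ q₂ q₃ r₁ r₂ r₃ : ℤ)
    (hP : Int.gcd p₁ (Int.gcd p₂ p₃) = 1)
    (hQ : Int.gcd q₁ (Int.gcd q₂ q₃) = 1)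
    (d : ℤ) (hd : d = (mg p₁ p₂ p₃ q₁ q₂ q₃ : ℤ)) (hd1 : 1 < d)
    (α β : ℤ) (hα : 0 < α) (hβ : 0 < β)
    (h1 : d * r₁ = β * p₁ + α * q₁)
    (h2 : d * r₂ = β * p₂ + α * q₂)
    (h3 : d * r₃ = β * p₃ + α * q₃) :
    α = (mg p₁ p₂ p₃ r₁ r₂ r₃ : ℤ) ∧ β = (mg r₁ r₂ r₃ q₁ q₂ q₃ : ℤ) ∧
      d ∣ α * q₁ + β * p₁ ∧ d ∣ α * q₂ + β * p₂ ∧ d ∣ α * q₃ + β * p₃ := by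
  have habs : ∀ a b c : ℤ, d * a = c * b → d.natAbs * a.natAbs = c.natAbs * b.natAbs := by
    intro a b c h
    rw [← Int.natAbs_mul, ← Int.natAbs_mul, h]
  have hdpos : (0:ℤ) < d := lt_trans one_pos hd1
  have hdnat : (d.natAbs : ℤ) = d := Int.natAbs_of_nonneg hdpos.le
  have hdmg : d.natAbs = mg p₁ p₂ p₃ q₁ q₂ q₃ := by
    have := congrArg Int.natAbs hd; simpa using this
  have hdne : d.natAbs ≠ 0 := by positivity
  -- α part
  have eα1 : d * (p₁ * r₂ - p₂ * r₁) = α * (p₁ * q₂ - p₂ * q₁) := by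
    linear_combination p₁ * h2 - p₂ * h1
  have eα2 : d * (p₁ * r₃ - p₃ * r₁) = α * (p₁ * q₃ - p₃ * q₁) := by
    linear_combination p₁ * h3 - p₃ * h1
  have eα3 : d * (p₂ * r₃ - p₃ * r₂) = α * (p₂ * q₃ - p₃ * q₂) := by
    linear_combination p₂ * h3 - p₃ * h2
  have keyα : d.natAbs * mg p₁ p₂ p₃ r₁ r₂ r₃ = α.natAbs * mg p₁ p₂ p₃ q₁ q₂ q₃ := by
    rw [mg_eq, mg_eq, ← Nat.gcd_mul_left, ← Nat.gcd_mul_left,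
      habs _ _ _ eα1, habs _ _ _ eα2, habs _ _ _ eα3,
      Nat.gcd_mul_left, Nat.gcd_mul_left]
  have hαeq : α.natAbs = mg p₁ p₂ p₃ r₁ r₂ r₃ := by
    rw [← hdmg] at keyα
    exact (Nat.eq_of_mul_eq_mul_left (Nat.pos_of_ne_zero hdne)
      (by rw [keyα, Nat.mul_comm])).symm
  -- β part
  have eβ1 : d * (r₁ * q₂ - r₂ * q₁) = β * (p₁ * q₂ - p₂ * q₁) := by
    linear_combination q₂ * h1 - q₁ * h2
  have eβ2 : d * (r₁ * q₃ - r₃ * q₁) = β * (p₁ * q₃ - p₃ * q₁) := by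
    linear_combination q₃ * h1 - q₁ * h3
  have eβ3 : d * (r₂ * q₃ - r₃ * q₂) = β * (p₂ * q₃ - p₃ * q₂) := by
    linear_combination q₃ * h2 - q₂ * h3
  have keyβ : d.natAbs * mg r₁ r₂ r₃ q₁ q₂ q₃ = β.natAbs * mg p₁ p₂ p₃ q₁ q₂ q₃ := by
    rw [mg_eq, mg_eq, ← Nat.gcd_mul_left, ← Nat.gcd_mul_left,
      habs _ _ _ eβ1, habs _ _ _ eβ2, habs _ _ _ eβ3,
      Nat.gcd_mul_left, Nat.gcd_mul_left]
  have hβeq : β.natAbs = mg r₁ r₂ r₃ q₁ q₂ q₃ := by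
    rw [← hdmg] at keyβ
    exact (Nat.eq_of_mul_eq_mul_left (Nat.pos_of_ne_zero hdne)
      (by rw [keyβ, Nat.mul_comm])).symm
  refine ⟨?_, ?_, ⟨r₁, by linarith⟩, ⟨r₂, by linarith⟩, ⟨r₃, by linarith⟩⟩
  · rw [← hαeq]; exact (Int.natAbs_of_nonneg hα.le).symm
  · rw [← hβeq]; exact (Int.natAbs_of_nonneg hβ.le).symm
end

section
/- Let a, b, c ≥ 2 be pairwise coprime integers. Set δ = abc − ab − bc − ca and assume δ > 0 (i.e., 1/a + 1/b + 1/c < 1). Let Q = (c, ac−a−c, a) and R = (b, a, ab−a−b). Then the gcd of the 2×2 minors of (Q,R) equals δ. -/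
theorem mg_eq_natAbs_of_dvd {p₁ p₂ p₃ q₁ q₂ q₃ d : ℤ} (h₁₂ : d ∣ p₁ * q₂ - p₂ * q₁)
    (h₁₃ : p₁ * q₃ - p₃ * q₁ = d) (h₂₃ : d ∣ p₂ * q₃ - p₃ * q₂) :
    mg p₁ p₂ p₃ q₁ q₂ q₃ = d.natAbs := by
  rw [mg, h₁₃, Int.gcd_eq_natAbs_left h₂₃]
  exact Int.gcd_eq_natAbs_right (Int.natCast_dvd.mpr (Int.natAbs_dvd_natAbs.mpr h₁₂))
    |>.trans (Int.natAbs_natCast _)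

theorem stmt5_general (a b c : ℤ)
    (δ : ℤ) (hδ : δ = a*b*c - a*b - b*c - c*a) (hpos : 0 < δ) :
    (mg c (a*c - a - c) a b a (a*b - a - b) : ℤ) = δ := by
  have minor₁₂ : c * a - (a*c - a - c) * b = -δ := by rw [hδ]; ring
  have minor₁₃ : c * (a*b - a - b) - a * b = δ := by rw [hδ]; ring
  have minor₂₃ : (a*c - a - c) * (a*b - a - b) - a * a = (a - 1) * δ := by rw [hδ]; ring
  rw [mg_eq_natAbs_of_dvd (minor₁₂ ▸ (dvd_neg.mpr dvd_rfl)) minor₁₃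
    (minor₂₃ ▸ dvd_mul_left δ (a - 1)), Int.natAbs_of_nonneg hpos.le]

theorem stmt5 (a b c : ℤ) (ha : 2 ≤ a) (hb : 2 ≤ b) (hc : 2 ≤ c)
    (hab : Int.gcd a b = 1) (hbc : Int.gcd b c = 1) (hac : Int.gcd a c = 1)
    (δ : ℤ) (hδ : δ = a*b*c - a*b - b*c - c*a) (hpos : 0 < δ) :
    (mg c (a*c - a - c) a b a (a*b - a - b) : ℤ) = δ :=
  stmt5_general a b c δ hδ hpos
end

section
/- Let p, q, r be pairwise coprime integers with 2 ≤ p < q < r and 1/p + 1/q + 1/r < 1. Let δ = pqr − pq − qr − rp, Q = (r, pr−p−r, p), R = (q, p, pq−p−q). Then an integral vector P' = (βQ + αR)/δ with positive integers α, β has first coordinate 1 if and only if P' = (1, k, p−k−1) for some integer k with p/q < k < (pr−p−r)/r. -/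
theorem stmt6 (p q r : ℤ) (hp : 2 ≤ p) (hpq : p < q) (hqr : q < r)
    (hpq1 : Int.gcd p q = 1) (hqr1 : Int.gcd q r = 1) (hpr1 : Int.gcd p r = 1)
    (hδ : 0 < p*q*r - p*q - q*r - r*p)
    (p₁ p₂ p₃ : ℤ)
    (h : ∃ α β : ℤ, 0 < α ∧ 0 < β ∧
      (p*q*r - p*q - q*r - r*p) * p₁ = β * r + α * q ∧
      (p*q*r - p*q - q*r - r*p) * p₂ = β * (p*r - p - r) + α * p ∧
      (p*q*r - p*q - q*r - r*p) * p₃ = β * p + α * (p*q - p - q)) :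
    p₁ = 1 ↔ ∃ k : ℤ, p < k * q ∧ k * r < p*r - p - r ∧ p₂ = k ∧ p₃ = p - k - 1 := by
  obtain ⟨α, β, hα, hβ, e1, e2, e3⟩ := h
  have hδ0 : (p*q*r - p*q - q*r - r*p) ≠ 0 := ne_of_gt hδ
  have hsum : p₂ + p₃ = (p-1) * p₁ := by
    have h' : (p*q*r - p*q - q*r - r*p) * (p₂ + p₃)
        = (p*q*r - p*q - q*r - r*p) * ((p-1) * p₁) := by
      linear_combination e2 + e3 - (p-1) * e1
    exact mul_left_cancel₀ hδ0 h'
  constructor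
  · intro h1
    subst h1
    refine ⟨p₂, ?_, ?_, rfl, by linarith⟩
    · have hb : (p*q*r - p*q - q*r - r*p) * (p₂ * q - p)
          = (p*q*r - p*q - q*r - r*p) * β := by
        linear_combination q * e2 - p * e1
      have := mul_left_cancel₀ hδ0 hb
      linarith
    · have ha : (p*q*r - p*q - q*r - r*p) * ((p*r - p - r) - p₂ * r)
          = (p*q*r - p*q - q*r - r*p) * α := by
        linear_combination (p*r - p - r) * e1 - r * e2
      have := mul_left_cancel₀ hδ0 ha
      linarith
  · rintro ⟨k, _, _, rfl, hk3⟩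
    have h' : (p-1) * p₁ = (p-1) * 1 := by linarith
    have hp1 : (p - 1 : ℤ) ≠ 0 := by omega
    exact mul_left_cancel₀ hp1 h'
end

section
/- Let p, q, r be pairwise coprime with 2 ≤ p < q < r and 1/p+1/q+1/r < 1. With Q, R as above, the three sets V₁ = {(1,k,p−1−k) : p/q < k < (pr−p−r)/r, k ∈ ℤ}, V₂ = {(k,1,(p−1)k−1) : r/(pr−p−r) < k < q/p, k ∈ ℤ}, V₃ = {(k,(p−1)k−1,1) : q/(pq−p−q) < k < r/p, k ∈ ℤ} have a common element if and only if p = 3, in which case the common element is (1,1,1). -/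
theorem stmt8 (p q r : ℤ) (hp : 2 ≤ p) (hpq : p < q) (hqr : q < r)
    (hpq1 : Int.gcd p q = 1) (hqr1 : Int.gcd q r = 1) (hpr1 : Int.gcd p r = 1)
    (hδ : 0 < p*q*r - p*q - q*r - r*p) :
    ((∃ v : ℤ × ℤ × ℤ,
        (∃ k : ℤ, p < k * q ∧ k * r < p*r - p - r ∧ v = (1, k, p - 1 - k)) ∧
        (∃ k : ℤ, r < k * (p*r - p - r) ∧ k * p < q ∧ v = (k, 1, (p-1)*k - 1)) ∧
        (∃ k : ℤ, q < k * (p*q - p - q) ∧ k * p < r ∧ v = (k, (p-1)*k - 1, 1))) ↔ p = 3) ∧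
    (∀ v : ℤ × ℤ × ℤ,
        (∃ k : ℤ, p < k * q ∧ k * r < p*r - p - r ∧ v = (1, k, p - 1 - k)) →
        (∃ k : ℤ, r < k * (p*r - p - r) ∧ k * p < q ∧ v = (k, 1, (p-1)*k - 1)) →
        (∃ k : ℤ, q < k * (p*q - p - q) ∧ k * p < r ∧ v = (k, (p-1)*k - 1, 1)) →
        v = (1, 1, 1)) := by
  constructor
  · constructor
    · rintro ⟨v, ⟨k1, h1a, h1b, rfl⟩, ⟨k2, h2a, h2b, hv2⟩, ⟨k3, h3a, h3b, hv3⟩⟩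
      simp only [Prod.mk.injEq] at hv2 hv3
      obtain ⟨rfl, hv2⟩ := hv2
      obtain ⟨rfl, hv3⟩ := hv3
      simp only [mul_one] at hv2 hv3
      omega
    · rintro rfl
      refine ⟨(1, 1, 1), ⟨1, by omega, by omega, by norm_num⟩,
        ⟨1, by omega, by omega, by norm_num⟩, ⟨1, by omega, by omega, by norm_num⟩⟩
  · rintro v ⟨k1, h1a, h1b, rfl⟩ ⟨k2, h2a, h2b, hv2⟩ ⟨k3, h3a, h3b, hv3⟩
    simp only [Prod.mk.injEq] at hv2 hv3 ⊢
    obtain ⟨rfl, hv2⟩ := hv2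
    obtain ⟨rfl, hv3⟩ := hv3
    simp only [mul_one] at hv2 hv3
    exact ⟨trivial, hv2.1, hv3.2⟩
end

section
/- Let b, c ≥ 2. The Hirzebruch–Jung continued fraction expansion of (bc−1)/(bc−c−1) is [2,…,2,3,2,…,2] where the first block of 2's has length b−2 and the second block has length c−2. -/
/-- Value of the Hirzebruch–Jung continued fraction
`[m₁,…,m_k] = m₁ − 1/[m₂,…,m_k]`, `[m] = m`. -/
def hjVal : List ℤ → ℚ
  | [] => 0
  | [m] => (m : ℚ)
  | m :: rest => (m : ℚ) - 1 / hjVal rest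

lemma hjVal_cons (a : ℤ) (l : List ℤ) (hl : l ≠ []) :
    hjVal (a :: l) = (a : ℚ) - 1 / hjVal l := by
  cases l with
  | nil => exact absurd rfl hl
  | cons b t => rfl

lemma hjVal_rep2 (n : ℕ) :
    hjVal (List.replicate (n + 1) 2) = ((n : ℚ) + 2) / ((n : ℚ) + 1) := by
  induction n with
  | zero => norm_num [hjVal]
  | succ n ih =>
    rw [List.replicate_succ, hjVal_cons 2 _ (by simp), ih]
    have h1 : (n : ℚ) + 1 > 0 := by positivity
    have h2 : (n : ℚ) + 2 > 0 := by positivity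
    push_cast
    field_simp
    ring

lemma hjVal_aux3 (n : ℕ) :
    hjVal (3 :: List.replicate n 2) = (2 * (n : ℚ) + 3) / ((n : ℚ) + 1) := by
  cases n with
  | zero => norm_num [hjVal]
  | succ n =>
    rw [hjVal_cons 3 _ (by simp), hjVal_rep2]
    have h1 : (n : ℚ) + 1 > 0 := by positivity
    have h2 : (n : ℚ) + 2 > 0 := by positivity
    push_cast
    field_simp
    ring

lemma hjVal_main (m n : ℕ) :
    hjVal (List.replicate m 2 ++ 3 :: List.replicate n 2)
      = ((m : ℚ) * n + 2 * m + 2 * n + 3) / ((m : ℚ) * n + 2 * m + n + 1) := by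
  induction m with
  | zero => simpa using hjVal_aux3 n
  | succ m ih =>
    rw [List.replicate_succ, List.cons_append, hjVal_cons 2 _ (by simp), ih]
    have h1 : (m : ℚ) * n + 2 * m + n + 1 > 0 := by positivity
    have h2 : (m : ℚ) * n + 2 * m + 2 * n + 3 > 0 := by positivity
    push_cast
    field_simp
    ring

theorem stmt12 (b c : ℕ) (hb : 2 ≤ b) (hc : 2 ≤ c) :
    hjVal (List.replicate (b - 2) 2 ++ 3 :: List.replicate (c - 2) 2)
      = ((b * c : ℚ) - 1) / ((b * c : ℚ) - (c : ℚ) - 1) := by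
  obtain ⟨m, rfl⟩ : ∃ m, b = m + 2 := ⟨b - 2, by omega⟩
  obtain ⟨n, rfl⟩ : ∃ n, c = n + 2 := ⟨c - 2, by omega⟩
  simp only [Nat.add_sub_cancel]
  rw [hjVal_main]
  congr 1 <;> push_cast <;> ring
end

section
/- Let b, c ≥ 2, P = (bc−1, 1, b), Q = (0, c, 1). Then the gcd of the 2×2 minors of (P,Q) equals bc−1, and the integral vectors of the canonical subdivision of Cone(P,Q) from P are Q_j = (cb−jc−1, 1, b−j) for j = 1,…,b−1 followed by Q_{b−1+j} = (c−j−1, j+1, 1) for j = 1,…,c−2. In particular all b+c−3 inserted vectors have some coordinate equal to 1. -/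
def mg3 (P Q : ℤ × ℤ × ℤ) : ℕ :=
  Int.gcd (P.1 * Q.2.1 - P.2.1 * Q.1)
    (Int.gcd (P.1 * Q.2.2 - P.2.2 * Q.1) (P.2.1 * Q.2.2 - P.2.2 * Q.2.1))

def subdivV (b c i : ℤ) : ℤ × ℤ × ℤ :=
  if i ≤ 0 then (b*c - 1, 1, b)
  else if i ≤ b - 1 then (c*b - i*c - 1, 1, b - i)
  else if i ≤ b + c - 3 then (c - (i - b + 1) - 1, (i - b + 1) + 1, 1)
  else (0, c, 1)

lemma mg3_of_third (P Q : ℤ × ℤ × ℤ) (h : P.2.1 * Q.2.2 - P.2.2 * Q.2.1 = -1) :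
    mg3 P Q = 1 := by
  unfold mg3
  rw [h]
  simp [Int.gcd]

lemma subdiv_eq1 (b c i : ℤ) (h0 : 0 ≤ i) (h1 : i ≤ b - 1) :
    subdivV b c i = (c*b - i*c - 1, 1, b - i) := by
  unfold subdivV
  rcases lt_or_eq_of_le h0 with h | h
  · rw [if_neg (by omega), if_pos h1]
  · rw [if_pos (by omega)]
    simp [← h]; ring

lemma subdiv_eq2 (b c i : ℤ) (hb : 2 ≤ b) (hc : 2 ≤ c)
    (h0 : b - 1 ≤ i) (h1 : i ≤ b + c - 2) :
    subdivV b c i = (c - (i - b + 1) - 1, (i - b + 1) + 1, 1) := by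
  unfold subdivV
  rw [if_neg (by omega)]
  by_cases h : i ≤ b - 1
  · have : i = b - 1 := le_antisymm h h0
    subst this
    rw [if_pos le_rfl]
    simp only [Prod.mk.injEq]
    all_goals and_intros
    all_goals first | ring | trivial
  · rw [if_neg h]
    by_cases h2 : i ≤ b + c - 3
    · rw [if_pos h2]
    · rw [if_neg h2]
      have : i = b + c - 2 := by omega
      subst this
      simp only [Prod.mk.injEq]
      all_goals and_intros
      all_goals first | ring | trivial

theorem stmt13 (b c : ℤ) (hb : 2 ≤ b) (hc : 2 ≤ c) :
    (mg3 (b*c - 1, 1, b) (0, c, 1) : ℤ) = b*c - 1 ∧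
    (∀ i : ℤ, 0 ≤ i → i ≤ b + c - 3 →
      mg3 (subdivV b c i) (subdivV b c (i+1)) = 1) ∧
    (∀ i : ℤ, 1 ≤ i → i ≤ b + c - 3 →
      subdivV b c (i-1) + subdivV b c (i+1)
        = (if i = b - 1 then (3 : ℤ) else 2) • subdivV b c i) ∧
    (∀ i : ℤ, 1 ≤ i → i ≤ b + c - 3 →
      (subdivV b c i).2.1 = 1 ∨ (subdivV b c i).2.2 = 1) := by
  refine ⟨?_, ?_, ?_, ?_⟩
  · unfold mg3
    simp only
    have h1 : (b*c - 1) * c - 1 * 0 = c * (b*c - 1) := by ring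
    have h2 : (b*c - 1) * 1 - b * 0 = 1 * (b*c - 1) := by ring
    have h3 : (1 : ℤ) * 1 - b * c = (-1) * (b*c - 1) := by ring
    have hpos : 0 ≤ b * c - 1 := by nlinarith
    rw [h1, h2, h3, Int.gcd_mul_right]
    have e1 : Int.gcd 1 (-1) = 1 := by decide
    rw [e1, one_mul, Int.natAbs_of_nonneg hpos]
    have e2 : Int.gcd (c * (b*c - 1)) (b*c - 1) = (b*c - 1).natAbs := by
      rw [Int.gcd, Int.natAbs_mul]
      exact Nat.gcd_mul_left_left ..
    rw [e2, Int.natAbs_of_nonneg hpos]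
  · intro i h0 h1
    apply mg3_of_third
    by_cases h : i ≤ b - 2
    · rw [subdiv_eq1 b c i h0 (by omega), subdiv_eq1 b c (i+1) (by omega) (by omega)]
      simp only
      ring
    · rw [subdiv_eq2 b c i hb hc (by omega) (by omega),
        subdiv_eq2 b c (i+1) hb hc (by omega) (by omega)]
      simp only
      ring
  · intro i h0 h1
    by_cases hm : i = b - 1
    · subst hm
      rw [if_pos rfl, subdiv_eq1 b c (b-1-1) (by omega) (by omega),
        subdiv_eq2 b c (b-1+1) hb hc (by omega) (by omega),
        subdiv_eq1 b c (b-1) (by omega) le_rfl]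
      simp only [Prod.mk_add_mk, Prod.smul_mk, smul_eq_mul, Prod.mk.injEq]
      all_goals and_intros
      all_goals first | ring | trivial
    · rw [if_neg hm]
      by_cases h : i ≤ b - 2
      · rw [subdiv_eq1 b c (i-1) (by omega) (by omega),
          subdiv_eq1 b c (i+1) (by omega) (by omega),
          subdiv_eq1 b c i (by omega) (by omega)]
        simp only [Prod.mk_add_mk, Prod.smul_mk, smul_eq_mul, Prod.mk.injEq]
        all_goals and_intros
        all_goals first | ring | trivial
      · rw [subdiv_eq2 b c (i-1) hb hc (by omega) (by omega),
          subdiv_eq2 b c (i+1) hb hc (by omega) (by omega),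
          subdiv_eq2 b c i hb hc (by omega) (by omega)]
        simp only [Prod.mk_add_mk, Prod.smul_mk, smul_eq_mul, Prod.mk.injEq]
        all_goals and_intros
        all_goals first | ring | trivial
  · intro i h0 h1
    by_cases h : i ≤ b - 1
    · left
      rw [subdiv_eq1 b c i (by omega) h]
    · right
      rw [subdiv_eq2 b c i hb hc (by omega) (by omega)]
end

section
/- Let a, b, c ≥ 2, e = gcd(b,c), â = gcd(a, b−1), d = e·gcd(a, c(b−1)/e). Suppose there exist positive integers α, β with aβ + dα = b−1 and c | (aβ + 1). Then gcd(a,c) = 1, b > a, b > c, and d = e·â. -/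
/-! Since `c ∣ aβ + 1`, `a` is coprime to `c` and hence to `c / e`, so `gcd(a, (c / e)(b - 1)) = â`.
The inequalities come from `b - 1 = aβ + dα` with `d ≥ 1` and `c ≤ aβ + 1`. -/

theorem Int.isCoprime_of_dvd_mul_add_one {a c β : ℤ} (h : c ∣ a * β + 1) : IsCoprime a c := by
  obtain ⟨k, hk⟩ := h
  exact ⟨-β, k, by linarith⟩

theorem Int.gcd_mul_left_cancel_right_of_isCoprime {a c : ℤ} (n : ℤ) (h : IsCoprime a c) :
    Int.gcd a (c * n) = Int.gcd a n := by
  have hcop : Nat.Coprime c.natAbs a.natAbs := Nat.Coprime.symm (Int.isCoprime_iff_gcd_eq_one.mp h)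
  rw [Int.gcd, Int.gcd, Int.natAbs_mul]
  exact hcop.gcd_mul_left_cancel_right _

theorem Int.gcd_mul_ediv_eq_of_isCoprime {a c e : ℤ} (n : ℤ) (h : IsCoprime a c) (he : e ∣ c) :
    Int.gcd a (c * n / e) = Int.gcd a n := by
  rw [Int.mul_ediv_assoc' n he]
  exact Int.gcd_mul_left_cancel_right_of_isCoprime n
    (h.of_isCoprime_of_dvd_right (Int.ediv_dvd_of_dvd he))

theorem stmt15_general (a b c : ℤ) (ha : 2 ≤ a) (hc : 2 ≤ c)
    (e : ℤ) (he : e = (Int.gcd b c : ℤ))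
    (ahat : ℤ) (hahat : ahat = (Int.gcd a (b - 1) : ℤ))
    (d : ℤ) (hd : d = e * (Int.gcd a (c * (b - 1) / e) : ℤ))
    (α β : ℤ) (hα : 0 < α) (hβ : 0 < β)
    (h1 : a * β + d * α = b - 1) (h2 : c ∣ a * β + 1) :
    Int.gcd a c = 1 ∧ a < b ∧ c < b ∧ d = e * ahat := by
  have hcop : IsCoprime a c := Int.isCoprime_of_dvd_mul_add_one h2
  have he_dvd : e ∣ c := he ▸ Int.gcd_dvd_right b c
  have hgcd : Int.gcd a (c * (b - 1) / e) = Int.gcd a (b - 1) :=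
    Int.gcd_mul_ediv_eq_of_isCoprime (b - 1) hcop he_dvd
  have he_pos : 0 < e := he ▸ Int.natCast_pos.mpr (Int.gcd_pos_of_ne_zero_right b (by omega))
  have hd_pos : 0 < d := by
    rw [hd]
    exact mul_pos he_pos (Int.natCast_pos.mpr (Int.gcd_pos_of_ne_zero_left _ (by omega)))
  have hdα : 0 < d * α := mul_pos hd_pos hα
  have haβ : a ≤ a * β := le_mul_of_one_le_right (by omega) hβ
  have hc_le : c ≤ a * β + 1 := Int.le_of_dvd (by omega) h2
  refine ⟨Int.isCoprime_iff_gcd_eq_one.mp hcop, by omega, by omega, ?_⟩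
  rw [hd, hgcd, hahat]

theorem stmt15 (a b c : ℤ) (ha : 2 ≤ a) (hb : 2 ≤ b) (hc : 2 ≤ c)
    (e : ℤ) (he : e = (Int.gcd b c : ℤ))
    (ahat : ℤ) (hahat : ahat = (Int.gcd a (b - 1) : ℤ))
    (d : ℤ) (hd : d = e * (Int.gcd a (c * (b - 1) / e) : ℤ))
    (α β : ℤ) (hα : 0 < α) (hβ : 0 < β)
    (h1 : a * β + d * α = b - 1) (h2 : c ∣ a * β + 1) :
    Int.gcd a c = 1 ∧ a < b ∧ c < b ∧ d = e * ahat :=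
  stmt15_general a b c ha hc e he ahat hahat d hd α β hα hβ h1 h2
end

section
/- Let a, b, c ≥ 2 with gcd(a,c) = 1, e = gcd(b,c), â = gcd(a,b−1), and suppose ⌊b/c⌋ ≥ a + â. Then there exist positive integers α, β with aβ + eâα = b−1 and c | (b − eâα). -/
/-
Pick `0 < β < c` with `a β ≡ -1 (mod c)`, possible since `gcd(a, c) = 1`. Then `b - 1 - aβ` is
divisible by `e` (as `e ∣ b` and `e ∣ c ∣ aβ + 1`) and by `â` (as `â ∣ a` and `â ∣ b - 1`). These are
coprime, being divisors of `c` and of `a`, so `b - 1 - aβ = e â α`. The bound `⌊b/c⌋ ≥ a + â` gives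
`b - 1 - aβ ≥ â c + a - 1 > 0`, so `α > 0`, and `b - e â α = aβ + 1` is divisible by `c`.
-/

theorem Int.exists_pos_lt_mul_add_one_dvd {a c : ℤ} (hac : IsCoprime a c) (hc : 1 < c) :
    ∃ β, 0 < β ∧ β < c ∧ c ∣ a * β + 1 := by
  obtain ⟨u, v, huv⟩ := hac
  have hdvd : c ∣ a * (-u % c) + 1 := by
    rw [Int.emod_def]
    exact ⟨v - a * (-u / c), by linear_combination -huv⟩
  refine ⟨-u % c, ?_, Int.emod_lt_of_pos _ (by omega), hdvd⟩
  refine (Int.emod_nonneg _ (by omega)).lt_of_ne fun h => ?_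
  rw [← h, mul_zero, zero_add] at hdvd
  have := Int.le_of_dvd one_pos hdvd
  omega

theorem Int.isCoprime_gcd_gcd {a c : ℤ} (hac : IsCoprime a c) (x y : ℤ) :
    IsCoprime (x.gcd c : ℤ) (a.gcd y : ℤ) :=
  (hac.symm.of_isCoprime_of_dvd_left (Int.gcd_dvd_right x c)).of_isCoprime_of_dvd_right
    (Int.gcd_dvd_left a y)

theorem stmt16_general (a b c : ℤ) (ha : 2 ≤ a) (hc : 2 ≤ c)
    (hac : Int.gcd a c = 1)
    (e : ℤ) (he : e = (Int.gcd b c : ℤ))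
    (ahat : ℤ) (hahat : ahat = (Int.gcd a (b - 1) : ℤ))
    (hfloor : a + ahat ≤ b / c) :
    ∃ α β : ℤ, 0 < α ∧ 0 < β ∧
      a * β + e * ahat * α = b - 1 ∧ c ∣ b - e * ahat * α := by
  have hcop : IsCoprime a c := Int.isCoprime_iff_gcd_eq_one.mpr hac
  obtain ⟨β, hβ, hβc, hcβ⟩ := Int.exists_pos_lt_mul_add_one_dvd hcop (by omega)
  have he_dvd : e ∣ b - 1 - a * β := by
    rw [he, show b - 1 - a * β = b - (a * β + 1) by ring]
    exact dvd_sub (Int.gcd_dvd_left b c) ((Int.gcd_dvd_right b c).trans hcβ)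
  have hahat_dvd : ahat ∣ b - 1 - a * β := by
    rw [hahat]
    exact dvd_sub (Int.gcd_dvd_right a (b - 1)) ((Int.gcd_dvd_left a (b - 1)).mul_right β)
  obtain ⟨α, hα⟩ := (he ▸ hahat ▸ Int.isCoprime_gcd_gcd hcop b (b - 1)).mul_dvd he_dvd hahat_dvd
  have hbc : (a + ahat) * c ≤ b := (Int.le_ediv_iff_mul_le (by omega)).mp hfloor
  have hahat_nonneg : 0 ≤ ahat := hahat ▸ Int.natCast_nonneg _
  have he_nonneg : 0 ≤ e := he ▸ Int.natCast_nonneg _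
  have hpos : 0 < e * ahat * α := by
    rw [← hα]
    nlinarith [mul_nonneg (by omega : (0 : ℤ) ≤ a) (by omega : (0 : ℤ) ≤ c - 1 - β),
      mul_nonneg hahat_nonneg (by omega : (0 : ℤ) ≤ c)]
  refine ⟨α, β, pos_of_mul_pos_right hpos (by positivity), hβ, by linarith, ?_⟩
  rwa [show b - e * ahat * α = a * β + 1 by linarith]

theorem stmt16 (a b c : ℤ) (ha : 2 ≤ a) (hb : 2 ≤ b) (hc : 2 ≤ c)
    (hac : Int.gcd a c = 1)
    (e : ℤ) (he : e = (Int.gcd b c : ℤ))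
    (ahat : ℤ) (hahat : ahat = (Int.gcd a (b - 1) : ℤ))
    (hfloor : a + ahat ≤ b / c) :
    ∃ α β : ℤ, 0 < α ∧ 0 < β ∧
      a * β + e * ahat * α = b - 1 ∧ c ∣ b - e * ahat * α :=
  stmt16_general a b c ha hc hac e he ahat hahat hfloor
end

section
/- Let P = (p₁,p₂,p₃), Q = (q₁,q₂,q₃) be primitive vectors in ℤ³ spanning a 2-dimensional cone, with d := gcd of the minors of (P,Q) > 1, and let Q₀ = Q, Q₁,…,Q_k, Q_{k+1} = P be the canonical subdivision. Writing Q_i = (β_iP + α_iQ)/d with α₀ = d, β₀ = 0, α_{k+1} = 0, β_{k+1} = d, the sequences satisfy α_i > α_{i+1} and β_i < β_{i+1} for 0 ≤ i ≤ k, and all α_i, β_i for 1 ≤ i ≤ k are positive integers strictly less than d. -/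
def minors (P Q : ℤ × ℤ × ℤ) : ℤ × ℤ × ℤ :=
  (P.1 * Q.2.1 - P.2.1 * Q.1, P.1 * Q.2.2 - P.2.2 * Q.1, P.2.1 * Q.2.2 - P.2.2 * Q.2.1)

def content3 (X : ℤ × ℤ × ℤ) : ℕ := Int.gcd X.1 (Int.gcd X.2.1 X.2.2)

theorem content3_smul (a : ℤ) (X : ℤ × ℤ × ℤ) : content3 (a • X) = a.natAbs * content3 X := by
  simp only [content3, Prod.smul_fst, Prod.smul_snd, smul_eq_mul, Int.gcd_eq_natAbs,
    Int.natAbs_mul, Int.natAbs_natCast, Nat.gcd_mul_left]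

theorem mg3_eq_content3_minors (P Q : ℤ × ℤ × ℤ) : mg3 P Q = content3 (minors P Q) := rfl

section Minors

variable (U W : ℤ × ℤ × ℤ) (a b c : ℤ)

theorem minors_smul_right : minors U (c • W) = c • minors U W := by
  ext <;> simp only [minors, Prod.smul_fst, Prod.smul_snd, smul_eq_mul] <;> ring

theorem minors_comm : minors W U = (-1 : ℤ) • minors U W := by
  ext <;> simp only [minors, Prod.smul_fst, Prod.smul_snd, smul_eq_mul] <;> ring

theorem minors_smul_add_smul_right : minors U (a • U + b • W) = b • minors U W := by
  ext <;> simp only [minors, Prod.smul_fst, Prod.smul_snd, Prod.fst_add, Prod.snd_add,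
    smul_eq_mul] <;> ring

theorem mg3_self : mg3 U U = 0 := by
  simp [mg3, mul_comm]

theorem mg3_comm : mg3 W U = mg3 U W := by
  rw [mg3_eq_content3_minors, minors_comm, content3_smul, Int.natAbs_neg, Int.natAbs_one, one_mul]
  rfl

theorem mg3_smul_right : (mg3 U (c • W) : ℤ) = |c| * mg3 U W := by
  rw [mg3_eq_content3_minors, minors_smul_right, content3_smul, Nat.cast_mul, Int.natCast_natAbs]
  rfl

theorem mg3_smul_left : (mg3 (c • U) W : ℤ) = |c| * mg3 U W := by
  rw [mg3_comm, mg3_smul_right, mg3_comm]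

theorem mg3_smul_add_smul_right : (mg3 U (a • U + b • W) : ℤ) = |b| * mg3 U W := by
  rw [mg3_eq_content3_minors, minors_smul_add_smul_right, content3_smul, Nat.cast_mul,
    Int.natCast_natAbs]
  rfl

theorem mg3_smul_add_smul_left : (mg3 (a • U + b • W) W : ℤ) = |a| * mg3 U W := by
  rw [mg3_comm, add_comm, mg3_smul_add_smul_right, mg3_comm]

end Minors

section Cone

variable {P Q X Y W : ℤ × ℤ × ℤ}

theorem abs_mul_mg3_of_smul_eq {a b c : ℤ} (ha : 0 ≤ a) (hb : 0 ≤ b)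
    (h : c • X = a • P + b • Q) :
    |c| * mg3 X Q = a * mg3 P Q ∧ |c| * mg3 P X = b * mg3 P Q := by
  refine ⟨?_, ?_⟩
  · rw [← mg3_smul_left, h, mg3_smul_add_smul_left, abs_of_nonneg ha]
  · rw [← mg3_smul_right, h, mg3_smul_add_smul_right, abs_of_nonneg hb]

theorem mg3_smul_eq_of_smul_eq {a b c : ℤ} (hc : 0 < c) (ha : 0 ≤ a) (hb : 0 ≤ b)
    (h : c • X = a • P + b • Q) :
    (mg3 P Q : ℤ) • X = (mg3 X Q : ℤ) • P + (mg3 P X : ℤ) • Q := by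
  obtain ⟨hXQ, hPX⟩ := abs_mul_mg3_of_smul_eq ha hb h
  rw [abs_of_pos hc] at hXQ hPX
  apply smul_right_injective _ hc.ne'
  linear_combination (norm := module) (mg3 P Q : ℤ) • h - hXQ • P - hPX • Q

theorem mg3_eq_of_smul_eq_add_smul {e : ℤ} (he : 0 ≤ e) (hX : mg3 P X ≠ 0)
    (h : (mg3 P X : ℤ) • Y = P + e • X) : (mg3 P Y : ℤ) = e := by
  have h' : (mg3 P X : ℤ) • Y = (1 : ℤ) • P + e • X := by rwa [one_smul]
  have key := (abs_mul_mg3_of_smul_eq zero_le_one he h').2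
  rw [Nat.abs_cast, mul_comm e] at key
  exact mul_left_cancel₀ (Nat.cast_ne_zero.mpr hX) key

theorem mg3_eq_one_of_smul_eq_add_smul {e : ℤ} (hX : mg3 P X ≠ 0)
    (h : (mg3 P X : ℤ) • Y = P + e • X) : mg3 X Y = 1 := by
  have h' : (mg3 P X : ℤ) • Y = e • X + (1 : ℤ) • P := by rw [h, one_smul, add_comm]
  have key := congrArg (fun Z => (mg3 X Z : ℤ)) h'
  simp only [mg3_smul_right, mg3_smul_add_smul_right, Nat.abs_cast, abs_one, one_mul,
    mg3_comm P X] at key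
  exact_mod_cast mul_right_eq_self₀.mp key |>.resolve_right (Nat.cast_ne_zero.mpr hX)

theorem dvd_of_smul_eq_smul {a s : ℤ} (hXY : mg3 X Y = 1) (h : a • W = s • Y) : a ∣ s := by
  have key := congrArg (fun Z => (mg3 X Z : ℤ)) h
  simp only [mg3_smul_right, hXY, Nat.cast_one, mul_one] at key
  exact (abs_dvd_abs _ _).mp (Dvd.intro _ key)

end Cone

theorem lt_succ_of_det_eq_of_dvd {α β : ℕ → ℤ} {d : ℤ} {n : ℕ} (hd : 0 < d)
    (hα : ∀ i, 0 ≤ α i) (hβ : ∀ i, 0 ≤ β i) (hβ0 : β 0 = 0)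
    (hanti : ∀ i < n, α (i + 1) < α i)
    (hdet : ∀ i < n, α i * β (i + 1) - α (i + 1) * β i = d)
    (hdvd : ∀ i, i + 2 ≤ n → α (i + 1) ∣ α i + α (i + 2)) :
    ∀ i < n, β i < β (i + 1) := by
  intro i hi
  induction i with
  | zero =>
    have h0 := hdet 0 hi
    rw [hβ0, mul_zero, sub_zero] at h0
    rw [hβ0]
    exact pos_of_mul_pos_right (h0 ▸ hd) (hα 0)
  | succ i ih =>
    obtain ⟨c, hc⟩ := hdvd i hi
    have hpos : 0 < α (i + 1) := (hα (i + 2)).trans_lt (hanti (i + 1) hi)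
    have hβc : β i + β (i + 2) = c * β (i + 1) := mul_left_cancel₀ hpos.ne' <| by
      linear_combination hdet (i + 1) hi - hdet i (by omega) + β (i + 1) * hc
    have hc2 : 1 < c := by
      refine lt_of_mul_lt_mul_left ?_ hpos.le
      linarith [hanti i (by omega), hα (i + 2)]
    nlinarith [ih (by omega), hβ (i + 1)]

/-- The canonical subdivision recurrence `α_i • V (i+1) = P + e_i • V i`, with the step
coefficient `e_i` already identified as `α_{i+1}`, where `α_i = mg3 P (V i)`. -/
def IsSubdivisionChain (P : ℤ × ℤ × ℤ) (V : ℕ → ℤ × ℤ × ℤ) (n : ℕ) : Prop :=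
  ∀ i < n, (mg3 P (V (i + 1)) : ℤ) < mg3 P (V i) ∧
    (mg3 P (V i) : ℤ) • V (i + 1) = P + (mg3 P (V (i + 1)) : ℤ) • V i

namespace IsSubdivisionChain

variable {P Q : ℤ × ℤ × ℤ} {n : ℕ} {V : ℕ → ℤ × ℤ × ℤ}

theorem smul_eq (h : IsSubdivisionChain P V n) (hV0 : V 0 = Q) (hd : mg3 P Q ≠ 0) :
    ∀ i ≤ n, (mg3 P Q : ℤ) • V i = (mg3 (V i) Q : ℤ) • P + (mg3 P (V i) : ℤ) • Q := by
  intro i hi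
  induction i with
  | zero => simp [hV0, mg3_self]
  | succ i ih =>
    obtain ⟨hanti, hrec⟩ := h i hi
    have hαi : (0 : ℤ) < mg3 P (V i) := (Nat.cast_nonneg _).trans_lt hanti
    refine mg3_smul_eq_of_smul_eq (c := mg3 P Q * mg3 P (V i))
      (a := mg3 P Q + mg3 P (V (i + 1)) * mg3 (V i) Q) (b := mg3 P (V (i + 1)) * mg3 P (V i))
      (by positivity) (by positivity) (by positivity) ?_
    linear_combination (norm := module)
      (mg3 P Q : ℤ) • hrec + (mg3 P (V (i + 1)) : ℤ) • ih (by omega)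

theorem det_eq (h : IsSubdivisionChain P V n) (hV0 : V 0 = Q) (hd : mg3 P Q ≠ 0) :
    ∀ i < n, (mg3 P (V i) : ℤ) * mg3 (V (i + 1)) Q - mg3 P (V (i + 1)) * mg3 (V i) Q
      = mg3 P Q := by
  intro i hi
  have hP : P ≠ 0 := by rintro rfl; simp [mg3] at hd
  have hrep := h.smul_eq hV0 hd
  have key : ((mg3 P (V i) : ℤ) * mg3 (V (i + 1)) Q - mg3 P (V (i + 1)) * mg3 (V i) Q
      - mg3 P Q) • P = 0 := by
    linear_combination (norm := module) (mg3 P Q : ℤ) • (h i hi).2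
      - (mg3 P (V i) : ℤ) • hrep (i + 1) hi + (mg3 P (V (i + 1)) : ℤ) • hrep i hi.le
  exact sub_eq_zero.mp ((smul_eq_zero.mp key).resolve_right hP)

theorem mg3_succ_dvd_add (h : IsSubdivisionChain P V n) :
    ∀ i, i + 2 ≤ n → (mg3 P (V (i + 1)) : ℤ) ∣ mg3 P (V i) + mg3 P (V (i + 2)) := by
  intro i hi
  have hαi : mg3 P (V i) ≠ 0 := by have := (h i (by omega)).1; omega
  refine dvd_of_smul_eq_smul (mg3_eq_one_of_smul_eq_add_smul hαi (h i (by omega)).2)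
    (W := V i + V (i + 2)) ?_
  linear_combination (norm := module) (h (i + 1) hi).2 - (h i (by omega)).2

theorem mg3_lt_succ (h : IsSubdivisionChain P V n) (hV0 : V 0 = Q) (hd : mg3 P Q ≠ 0) :
    ∀ i < n, (mg3 (V i) Q : ℤ) < mg3 (V (i + 1)) Q :=
  lt_succ_of_det_eq_of_dvd (α := fun i => (mg3 P (V i) : ℤ)) (β := fun i => (mg3 (V i) Q : ℤ))
    (by omega) (fun _ => Nat.cast_nonneg _) (fun _ => Nat.cast_nonneg _)
    (by simp [hV0, mg3_self]) (fun i hi => (h i hi).1) (h.det_eq hV0 hd) h.mg3_succ_dvd_add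

end IsSubdivisionChain

/-- The last step `α_k = 1`, `V (k+1) = P` extends the recurrence, as `1 • P = P + 0 • V k`. -/
theorem isSubdivisionChain_of_canonical {P : ℤ × ℤ × ℤ} {k : ℕ} {V : ℕ → ℤ × ℤ × ℤ}
    (hstep : ∀ i < k, 1 < (mg3 P (V i) : ℤ) ∧
      ∃ e : ℤ, 1 ≤ e ∧ e < (mg3 P (V i) : ℤ) ∧ (mg3 P (V i) : ℤ) • V (i + 1) = P + e • V i)
    (hVend : V (k + 1) = P) (hend : mg3 P (V k) = 1) :
    IsSubdivisionChain P V (k + 1) := by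
  intro i hi
  rcases (Nat.lt_succ_iff.mp hi).lt_or_eq with hi | rfl
  · obtain ⟨-, e, he1, he2, h⟩ := hstep i hi
    rw [mg3_eq_of_smul_eq_add_smul (by omega) (by omega) h]
    exact ⟨he2, h⟩
  · simp [hVend, hend, mg3_self]

theorem stmt18_general (P Q : ℤ × ℤ × ℤ)
    (d : ℤ) (hd : d = (mg3 P Q : ℤ)) (hd1 : 1 < d)
    (k : ℕ) (V : ℕ → ℤ × ℤ × ℤ) (hV0 : V 0 = Q) (hVend : V (k+1) = P)
    -- `V` is the canonical subdivision: at each step, with `dᵢ = det(P, V i) > 1`,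
    -- `V (i+1) = (P + e • V i) / dᵢ` for the (unique) integer `1 ≤ e < dᵢ`
    (hstep : ∀ i < k, 1 < (mg3 P (V i) : ℤ) ∧
      ∃ e : ℤ, 1 ≤ e ∧ e < (mg3 P (V i) : ℤ) ∧
        (mg3 P (V i) : ℤ) • V (i+1) = P + e • V i)
    (hend : mg3 P (V k) = 1) :
    ∃ α β : ℕ → ℤ,
      α 0 = d ∧ β 0 = 0 ∧ α (k+1) = 0 ∧ β (k+1) = d ∧
      (∀ i : ℕ, 1 ≤ i → i ≤ k →
        0 < α i ∧ α i < d ∧ 0 < β i ∧ β i < d ∧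
        d • V i = β i • P + α i • Q) ∧
      (∀ i : ℕ, i ≤ k → α (i+1) < α i ∧ β i < β (i+1)) := by
  subst hd
  have hd0 : mg3 P Q ≠ 0 := by omega
  have hchain := isSubdivisionChain_of_canonical hstep hVend hend
  have hαanti := strictAntiOn_Iic_of_succ_lt (ψ := fun i => (mg3 P (V i) : ℤ))
    fun i hi => (hchain i hi).1
  have hβmono := strictMonoOn_Iic_of_lt_succ (ψ := fun i => (mg3 (V i) Q : ℤ))
    (hchain.mg3_lt_succ hV0 hd0)
  have mem : ∀ j ≤ k + 1, j ∈ Set.Iic (k + 1) := fun _ => id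
  refine ⟨fun i => mg3 P (V i), fun i => mg3 (V i) Q, by simp [hV0], by simp [hV0, mg3_self],
    by simp [hVend, mg3_self], by simp [hVend],
    fun i hi hik => ⟨?_, ?_, ?_, ?_, hchain.smul_eq hV0 hd0 i (by omega)⟩,
    fun i hik => ⟨(hchain i (by omega)).1, hchain.mg3_lt_succ hV0 hd0 i (by omega)⟩⟩
  · simpa [hVend, mg3_self] using hαanti (mem i (by omega)) (mem (k + 1) le_rfl) (by omega)
  · simpa [hV0] using hαanti (mem 0 (by omega)) (mem i (by omega)) hi
  · simpa [hV0, mg3_self] using hβmono (mem 0 (by omega)) (mem i (by omega)) hi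
  · simpa [hVend] using hβmono (mem i (by omega)) (mem (k + 1) le_rfl) (by omega)

theorem stmt18 (P Q : ℤ × ℤ × ℤ)
    (hP : Int.gcd P.1 (Int.gcd P.2.1 P.2.2) = 1)
    (hQ : Int.gcd Q.1 (Int.gcd Q.2.1 Q.2.2) = 1)
    (d : ℤ) (hd : d = (mg3 P Q : ℤ)) (hd1 : 1 < d)
    (k : ℕ) (V : ℕ → ℤ × ℤ × ℤ) (hV0 : V 0 = Q) (hVend : V (k+1) = P)
    -- `V` is the canonical subdivision: at each step, with `dᵢ = det(P, V i) > 1`,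
    -- `V (i+1) = (P + e • V i) / dᵢ` for the (unique) integer `1 ≤ e < dᵢ`
    (hstep : ∀ i < k, 1 < (mg3 P (V i) : ℤ) ∧
      ∃ e : ℤ, 1 ≤ e ∧ e < (mg3 P (V i) : ℤ) ∧
        (mg3 P (V i) : ℤ) • V (i+1) = P + e • V i)
    (hend : mg3 P (V k) = 1) :
    ∃ α β : ℕ → ℤ,
      α 0 = d ∧ β 0 = 0 ∧ α (k+1) = 0 ∧ β (k+1) = d ∧
      (∀ i : ℕ, 1 ≤ i → i ≤ k →
        0 < α i ∧ α i < d ∧ 0 < β i ∧ β i < d ∧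
        d • V i = β i • P + α i • Q) ∧
      (∀ i : ℕ, i ≤ k → α (i+1) < α i ∧ β i < β (i+1)) :=
  stmt18_general P Q d hd hd1 k V hV0 hVend hstep hend
end

section
/- Let p, q, r be pairwise coprime, 2 ≤ p < q < r, 1/p+1/q+1/r < 1, P = (rq−r−q, r, q) and Q = (r, pr−p−r, p). If R' = (βP + αQ)/δ is integral with positive integers α, β (δ = pqr−pq−qr−rp), then R' cannot have first or second coordinate equal to 1; moreover R' has third coordinate 1 if and only if R' = (r−ℓ−1, ℓ, 1) for some integer ℓ with r/q < ℓ < (pr−p−r)/p. -/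
theorem stmt19 (p q r : ℤ) (hp : 2 ≤ p) (hpq : p < q) (hqr : q < r)
    (hpq1 : Int.gcd p q = 1) (hqr1 : Int.gcd q r = 1) (hpr1 : Int.gcd p r = 1)
    (hδ : 0 < p*q*r - p*q - q*r - r*p)
    (r₁ r₂ r₃ α β : ℤ) (hα : 0 < α) (hβ : 0 < β)
    (h1 : (p*q*r - p*q - q*r - r*p) * r₁ = β * (r*q - r - q) + α * r)
    (h2 : (p*q*r - p*q - q*r - r*p) * r₂ = β * r + α * (p*r - p - r))
    (h3 : (p*q*r - p*q - q*r - r*p) * r₃ = β * q + α * p) :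
    r₁ ≠ 1 ∧ r₂ ≠ 1 ∧
    (r₃ = 1 ↔ ∃ ℓ : ℤ, r < ℓ * q ∧ ℓ * p < p*r - p - r ∧
      r₁ = r - ℓ - 1 ∧ r₂ = ℓ) := by
  have hd : (p*q*r - p*q - q*r - r*p) ≠ 0 := ne_of_gt hδ
  have hprp : 0 < p*r - p - r := by nlinarith
  have hrqq : 0 < r*q - r - q := by nlinarith
  have hsum : r₁ + r₂ = (r-1) * r₃ := by
    apply mul_left_cancel₀ hd
    linear_combination h1 + h2 - (r-1)*h3
  refine ⟨?_, ?_, ?_⟩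
  · -- r₁ ≠ 1
    intro h
    subst h
    have hbe : β = p - r*r₃ := by
      apply mul_left_cancel₀ hd
      linear_combination r*h3 - p*h1
    have hae : α = (r*q - r - q)*r₃ - q := by
      apply mul_left_cancel₀ hd
      linear_combination q*h1 - (r*q - r - q)*h3
    have h30 : r₃ ≤ 0 := by nlinarith
    nlinarith [mul_nonpos_of_nonneg_of_nonpos (le_of_lt hrqq) h30]
  · -- r₂ ≠ 1
    intro h
    subst h
    have hbe : β = (p*r - p - r)*r₃ - p := by
      apply mul_left_cancel₀ hd
      linear_combination p*h2 - (p*r - p - r)*h3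
    have hae : α = q - r*r₃ := by
      apply mul_left_cancel₀ hd
      linear_combination r*h3 - q*h2
    have h30 : r₃ ≤ 0 := by nlinarith
    nlinarith [mul_nonpos_of_nonneg_of_nonpos (le_of_lt hprp) h30]
  · constructor
    · intro h
      subst h
      have hae : α = q*r₂ - r := by
        apply mul_left_cancel₀ hd
        linear_combination r*h3 - q*h2
      have hbe : β = (p*r - p - r) - p*r₂ := by
        apply mul_left_cancel₀ hd
        linear_combination p*h2 - (p*r - p - r)*h3
      exact ⟨r₂, by linarith [hα, hae], by linarith [hβ, hbe], by linarith [hsum], rfl⟩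
    · rintro ⟨ℓ, hl1, hl2, e1, e2⟩
      subst e1; subst e2
      have hr1 : (r - 1) * r₃ = (r - 1) * 1 := by linarith [hsum]
      have := mul_left_cancel₀ (by intro hh; omega : (r:ℤ) - 1 ≠ 0) hr1
      exact this
end
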